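/- arXiv:1911.10811 — 4 statements merged into one kernel-verified Lean document; each statement's English description precedes it below -/
import Mathlib

section
/- Let C > 0 and T' > 0 satisfy C·T' < 1. Let φ₁, φ₂, φ₁₂ : [0,T'] → ℝ be Lipschitz continuous with Lipschitz constant C, and assume max(|φ₁(0)|, |φ₂(0)|, |φ₁₂(0)|) = 1. If φ₁ has a zero in [0,T'] and φ₂ has a zero in [0,T'], then |φ₁₂(0)| = 1 and φ₁₂ has constant sign on [0,T']: φ₁₂(t)·φ₁₂(0) > 0 for every t ∈ [0,T'] (in particular φ₁₂ never vanishes). -/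
open Set

lemma lip_small (C T' : ℝ) (hC : 0 < C) (φ : ℝ → ℝ)
    (h : LipschitzOnWith (Real.toNNReal C) φ (Icc 0 T'))
    (t : ℝ) (ht : t ∈ Icc (0:ℝ) T') : |φ t - φ 0| ≤ C * T' := by
  have h0 : (0:ℝ) ∈ Icc (0:ℝ) T' := ⟨le_refl 0, ht.1.trans ht.2⟩
  have := h.dist_le_mul t ht 0 h0
  rw [Real.coe_toNNReal C hC.le] at this
  rw [Real.dist_eq, Real.dist_eq, sub_zero] at this
  have : |φ t - φ 0| ≤ C * |t| := this
  calc |φ t - φ 0| ≤ C * |t| := this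
    _ ≤ C * T' := by
        have : |t| ≤ T' := by rw [abs_of_nonneg ht.1]; exact ht.2
        nlinarith

/-- If `φ₁, φ₂, φ₁₂` are `C`-Lipschitz on `[0,T']` with `C·T' < 1`,
`max(|φ₁(0)|, |φ₂(0)|, |φ₁₂(0)|) = 1`, and both `φ₁` and `φ₂` vanish somewhere on
`[0,T']`, then `|φ₁₂(0)| = 1` and `φ₁₂` has constant sign on `[0,T']`. -/
theorem statement_7 (C T' : ℝ) (hC : 0 < C) (hT' : 0 < T') (hCT : C * T' < 1)
    (φ₁ φ₂ φ₁₂ : ℝ → ℝ)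
    (h₁ : LipschitzOnWith (Real.toNNReal C) φ₁ (Icc 0 T'))
    (h₂ : LipschitzOnWith (Real.toNNReal C) φ₂ (Icc 0 T'))
    (h₁₂ : LipschitzOnWith (Real.toNNReal C) φ₁₂ (Icc 0 T'))
    (hmax : max |φ₁ 0| (max |φ₂ 0| |φ₁₂ 0|) = 1)
    (hz₁ : ∃ t ∈ Icc (0:ℝ) T', φ₁ t = 0)
    (hz₂ : ∃ t ∈ Icc (0:ℝ) T', φ₂ t = 0) :
    |φ₁₂ 0| = 1 ∧ ∀ t ∈ Icc (0:ℝ) T', φ₁₂ t * φ₁₂ 0 > 0 := by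
  obtain ⟨t₁, ht₁, hφ₁⟩ := hz₁
  obtain ⟨t₂, ht₂, hφ₂⟩ := hz₂
  have hb₁ : |φ₁ 0| < 1 := by
    have := lip_small C T' hC φ₁ h₁ t₁ ht₁
    rw [hφ₁, zero_sub, abs_neg] at this
    linarith
  have hb₂ : |φ₂ 0| < 1 := by
    have := lip_small C T' hC φ₂ h₂ t₂ ht₂
    rw [hφ₂, zero_sub, abs_neg] at this
    linarith
  have h12 : |φ₁₂ 0| = 1 := by
    rcases max_cases |φ₁ 0| (max |φ₂ 0| |φ₁₂ 0|) with ⟨h, _⟩ | ⟨h, _⟩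
    · linarith [hmax ▸ h]
    · rw [h] at hmax
      rcases max_cases |φ₂ 0| |φ₁₂ 0| with ⟨h', _⟩ | ⟨h', _⟩
      · linarith [hmax ▸ h']
      · rw [h'] at hmax; exact hmax
  refine ⟨h12, fun t ht => ?_⟩
  have hd : |φ₁₂ t - φ₁₂ 0| < 1 := lt_of_le_of_lt (lip_small C T' hC φ₁₂ h₁₂ t ht) hCT
  have key : -(|φ₁₂ t - φ₁₂ 0| * |φ₁₂ 0|) ≤ (φ₁₂ t - φ₁₂ 0) * φ₁₂ 0 := by
    rw [← abs_mul]; exact neg_abs_le _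
  have hsq : φ₁₂ 0 * φ₁₂ 0 = 1 := by
    have := sq_abs (φ₁₂ 0)
    rw [h12] at this
    nlinarith
  nlinarith [key, hsq, h12, hd]
end

section
/- Let C > 0 and 0 < T' < 1 satisfy C·T' ≤ 1/2. Let φ₁, φ₂, φ₁₂ : [0,T'] → ℝ be such that φ₁ and φ₁₂ are Lipschitz continuous with Lipschitz constant C, φ₂ is absolutely continuous with |φ₂'(t)| ≤ |φ₁₂(t)| for a.e. t, and max(|φ₁(0)|, |φ₂(0)|, |φ₁₂(0)|) = 1. If φ₁ has a zero in [0,T'] and φ₁₂ has a zero in [0,T'], then φ₂(t) ≠ 0 for every t ∈ [0,T']. -/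
open MeasureTheory Set

/-! Both `φ₁` and `φ₁₂` are `C`-Lipschitz and vanish somewhere on `[0,T']`, so they are bounded
by `C T' ≤ 1/2` there. Hence the maximum at `0` is attained by `|φ₂ 0| = 1`, while
`|φ₂ t - φ₂ 0| ≤ ∫₀ᵗ |φ₁₂| ≤ t/2 < 1/2`. -/

lemma LipschitzOnWith.abs_le_of_eq_zero {f : ℝ → ℝ} {K : NNReal} {a b x y : ℝ}
    (hf : LipschitzOnWith K f (Icc a b)) (hx : x ∈ Icc a b) (hy : y ∈ Icc a b) (hy0 : f y = 0) :
    |f x| ≤ K * (b - a) := by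
  have hdist := hf.dist_le_mul x hx y hy
  rw [Real.dist_eq, hy0, sub_zero] at hdist
  exact hdist.trans (mul_le_mul_of_nonneg_left (Real.dist_le_of_mem_Icc hx hy) K.2)

lemma abs_setIntegral_Icc_le {g : ℝ → ℝ} {a b M : ℝ} (hab : a ≤ b)
    (hg : ∀ᵐ s, s ∈ Icc a b → |g s| ≤ M) : |∫ s in Icc a b, g s| ≤ M * (b - a) := by
  simpa only [Real.norm_eq_abs, Real.volume_real_Icc_of_le hab] using
    norm_setIntegral_le_of_norm_le_const_ae' (f := g) measure_Icc_lt_top hg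

lemma eq_of_max_max_eq_of_lt {α : Type*} [LinearOrder α] {a b c m : α} (h : max a (max b c) = m) (ha : a < m)
    (hc : c < m) : b = m := by
  by_contra hb
  have hbm : b < m := (h ▸ le_max_of_le_right (le_max_left b c)).lt_of_ne hb
  exact (max_lt ha (max_lt hbm hc)).ne h

theorem statement_9_general (C T' : ℝ) (hC : 0 < C) (hT'0 : 0 < T') (hT'1 : T' < 1)
    (hCT : C * T' ≤ 1 / 2) (φ₁ φ₂ φ₁₂ : ℝ → ℝ)
    (h₁ : LipschitzOnWith (Real.toNNReal C) φ₁ (Icc 0 T'))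
    (h₁₂ : LipschitzOnWith (Real.toNNReal C) φ₁₂ (Icc 0 T'))
    (g : ℝ → ℝ)
    (hφ₂ : ∀ t ∈ Icc (0:ℝ) T', φ₂ t = φ₂ 0 + ∫ s in Icc (0:ℝ) t, g s)
    (hg_bd : ∀ᵐ t ∂volume, t ∈ Icc (0:ℝ) T' → |g t| ≤ |φ₁₂ t|)
    (hmax : max |φ₁ 0| (max |φ₂ 0| |φ₁₂ 0|) = 1)
    (hz₁ : ∃ t ∈ Icc (0:ℝ) T', φ₁ t = 0)
    (hz₁₂ : ∃ t ∈ Icc (0:ℝ) T', φ₁₂ t = 0) :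
    ∀ t ∈ Icc (0:ℝ) T', φ₂ t ≠ 0 := by
  intro t ht hφ₂t
  obtain ⟨t₁, ht₁, hφ₁t₁⟩ := hz₁
  obtain ⟨t₂, ht₂, hφ₁₂t₂⟩ := hz₁₂
  have hCT' : (Real.toNNReal C : ℝ) * (T' - 0) ≤ 1 / 2 := by
    rwa [Real.coe_toNNReal C hC.le, sub_zero]
  have h0 : (0:ℝ) ∈ Icc 0 T' := left_mem_Icc.2 hT'0.le
  have hφ₁₂_le : ∀ s ∈ Icc (0:ℝ) T', |φ₁₂ s| ≤ 1 / 2 := fun s hs =>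
    (h₁₂.abs_le_of_eq_zero hs ht₂ hφ₁₂t₂).trans hCT'
  have hφ₂0 : |φ₂ 0| = 1 := eq_of_max_max_eq_of_lt hmax
    (by linarith [(h₁.abs_le_of_eq_zero h0 ht₁ hφ₁t₁).trans hCT']) (by linarith [hφ₁₂_le 0 h0])
  have hint : |∫ s in Icc (0:ℝ) t, g s| ≤ 1 / 2 * (t - 0) := by
    refine abs_setIntegral_Icc_le ht.1 ?_
    filter_upwards [hg_bd] with s hs hst
    have hsT : s ∈ Icc (0:ℝ) T' := Icc_subset_Icc le_rfl ht.2 hst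
    exact (hs hsT).trans (hφ₁₂_le s hsT)
  rw [hφ₂ t ht, add_eq_zero_iff_eq_neg] at hφ₂t
  rw [hφ₂t, abs_neg] at hφ₂0
  linarith [ht.2]

/-- If `C·T' ≤ 1/2` with `0 < T' < 1`, `φ₁` and `φ₁₂` are
`C`-Lipschitz on `[0,T']`, `φ₂` is absolutely continuous with `|φ₂'| ≤ |φ₁₂|` a.e.,
`max(|φ₁(0)|, |φ₂(0)|, |φ₁₂(0)|) = 1`, and both `φ₁` and `φ₁₂` vanish somewhere on
`[0,T']`, then `φ₂` never vanishes on `[0,T']`. -/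
theorem statement_9 (C T' : ℝ) (hC : 0 < C) (hT'0 : 0 < T') (hT'1 : T' < 1)
    (hCT : C * T' ≤ 1 / 2) (φ₁ φ₂ φ₁₂ : ℝ → ℝ)
    (h₁ : LipschitzOnWith (Real.toNNReal C) φ₁ (Icc 0 T'))
    (h₁₂ : LipschitzOnWith (Real.toNNReal C) φ₁₂ (Icc 0 T'))
    (g : ℝ → ℝ) (hg_int : IntegrableOn g (Icc 0 T'))
    (hφ₂ : ∀ t ∈ Icc (0:ℝ) T', φ₂ t = φ₂ 0 + ∫ s in Icc (0:ℝ) t, g s)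
    (hg_bd : ∀ᵐ t ∂volume, t ∈ Icc (0:ℝ) T' → |g t| ≤ |φ₁₂ t|)
    (hmax : max |φ₁ 0| (max |φ₂ 0| |φ₁₂ 0|) = 1)
    (hz₁ : ∃ t ∈ Icc (0:ℝ) T', φ₁ t = 0)
    (hz₁₂ : ∃ t ∈ Icc (0:ℝ) T', φ₁₂ t = 0) :
    ∀ t ∈ Icc (0:ℝ) T', φ₂ t ≠ 0 :=
  statement_9_general C T' hC hT'0 hT'1 hCT φ₁ φ₂ φ₁₂ h₁ h₁₂ g hφ₂ hg_bd hmax hz₁ hz₁₂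
end

section
/- Let X₁, X₂ : ℝ³ → ℝ³ be smooth vector fields, let (q,u) be an admissible pair on [0,T] whose trajectory q is time-optimal, and let λ be an extremal lift of (q,u). If φ₁₂(t) ≠ 0 for all t ∈ [0,T], then there is no nontrivial subinterval of [0,T] on which φ₁ vanishes identically, and there is no nontrivial subinterval of [0,T] on which φ₂ vanishes identically. In particular, the trajectory has no singular arcs. -/
open MeasureTheory Set
open scoped RealInnerProductSpace

noncomputable section

/-- The state space `ℝ³`, with its Euclidean inner product. -/
abbrev E3 : Type := EuclideanSpace ℝ (Fin 3)

/-- Lie bracket of vector fields: `[X,Y] = DY·X − DX·Y`. -/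
def lieBracketVF {E : Type*} [NormedAddCommGroup E] [NormedSpace ℝ E]
    (X Y : E → E) : E → E :=
  fun x => fderiv ℝ Y x (X x) - fderiv ℝ X x (Y x)

/-- `X₁₂ = [X₁, X₂]`. -/
def X12 (X₁ X₂ : E3 → E3) : E3 → E3 := lieBracketVF X₁ X₂

/-- `X₊₁₂ = [X₁ + X₂, X₁₂]`. -/
def Xp12 (X₁ X₂ : E3 → E3) : E3 → E3 :=
  lieBracketVF (fun x => X₁ x + X₂ x) (X12 X₁ X₂)

/-- `X₋₁₂ = [X₁ − X₂, X₁₂]`. -/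
def Xm12 (X₁ X₂ : E3 → E3) : E3 → E3 :=
  lieBracketVF (fun x => X₁ x - X₂ x) (X12 X₁ X₂)

/-- An admissible pair on `[0,T]`: a measurable control `u = (u₁,u₂)` with values in
`[−1,1]²` together with an absolutely continuous trajectory `q` (encoded by the
integral representation) satisfying `q' = u₁X₁(q) + u₂X₂(q)` a.e. on `[0,T]`. -/
def IsAdmissiblePair (X₁ X₂ : E3 → E3) (T : ℝ) (q : ℝ → E3) (u : ℝ → ℝ × ℝ) : Prop :=
  0 ≤ T ∧ Measurable u ∧ (∀ t ∈ Icc (0:ℝ) T, |(u t).1| ≤ 1 ∧ |(u t).2| ≤ 1) ∧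
    IntegrableOn (fun s => (u s).1 • X₁ (q s) + (u s).2 • X₂ (q s)) (Icc 0 T) ∧
    ∀ t ∈ Icc (0:ℝ) T,
      q t = q 0 + ∫ s in Icc (0:ℝ) t, ((u s).1 • X₁ (q s) + (u s).2 • X₂ (q s))

/-- A trajectory `q` on `[0,T]` is time-optimal if no admissible pair on a
shorter interval `[0,T'']` joins `q 0` to `q T`. -/
def IsTimeOptimal (X₁ X₂ : E3 → E3) (T : ℝ) (q : ℝ → E3) : Prop :=
  ¬ ∃ (T'' : ℝ) (q' : ℝ → E3) (u' : ℝ → ℝ × ℝ),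
      T'' < T ∧ IsAdmissiblePair X₁ X₂ T'' q' u' ∧ q' 0 = q 0 ∧ q' T'' = q T

/-- Right-hand side of the adjoint equation: `−(Dₓ(u₁X₁ + u₂X₂)(q t))ᵀ λ(t)`. -/
def adjVec (X₁ X₂ : E3 → E3) (u : ℝ → ℝ × ℝ) (q lam : ℝ → E3) (t : ℝ) : E3 :=
  -(ContinuousLinearMap.adjoint
      ((u t).1 • fderiv ℝ X₁ (q t) + (u t).2 • fderiv ℝ X₂ (q t)) (lam t))

/-- An extremal lift of an admissible pair `(q,u)` on `[0,T]`: a nonvanishing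
absolutely continuous solution of the adjoint equation satisfying the
maximality condition of the PMP a.e. -/
def IsExtremalLift (X₁ X₂ : E3 → E3) (T : ℝ) (q : ℝ → E3) (u : ℝ → ℝ × ℝ)
    (lam : ℝ → E3) : Prop :=
  (∀ t ∈ Icc (0:ℝ) T, lam t ≠ 0) ∧
    IntegrableOn (adjVec X₁ X₂ u q lam) (Icc 0 T) ∧
    (∀ t ∈ Icc (0:ℝ) T, lam t = lam 0 + ∫ s in Icc (0:ℝ) t, adjVec X₁ X₂ u q lam s) ∧
    ∀ᵐ t ∂volume, t ∈ Icc (0:ℝ) T →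
      (u t).1 * ⟪lam t, X₁ (q t)⟫ + (u t).2 * ⟪lam t, X₂ (q t)⟫ =
        |⟪lam t, X₁ (q t)⟫| + |⟪lam t, X₂ (q t)⟫|

/-- The switching function `t ↦ ⟨λ(t), X(q(t))⟩` associated with a vector field `X`. -/
def phiF (X : E3 → E3) (q lam : ℝ → E3) (t : ℝ) : ℝ := ⟪lam t, X (q t)⟫

/-- `(a,b)` is a bang arc: a maximal open subinterval of `[0,T]` on which both
`φ₁` and `φ₂` are nonvanishing. -/
def IsBangArc (T : ℝ) (φ₁ φ₂ : ℝ → ℝ) (a b : ℝ) : Prop :=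
  0 ≤ a ∧ a < b ∧ b ≤ T ∧ (∀ t ∈ Ioo a b, φ₁ t ≠ 0 ∧ φ₂ t ≠ 0) ∧
    ∀ a' b', 0 ≤ a' → a' ≤ a → b ≤ b' → b' ≤ T →
      (∀ t ∈ Ioo a' b', φ₁ t ≠ 0 ∧ φ₂ t ≠ 0) → a' = a ∧ b' = b

/-- `(a,b)` is a `u₁`-singular arc: a maximal open subinterval of `[0,T]` on which
`φ₁` vanishes identically and `φ₂` is nonvanishing. -/
def IsU1SingularArc (T : ℝ) (φ₁ φ₂ : ℝ → ℝ) (a b : ℝ) : Prop :=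
  0 ≤ a ∧ a < b ∧ b ≤ T ∧ (∀ t ∈ Ioo a b, φ₁ t = 0 ∧ φ₂ t ≠ 0) ∧
    ∀ a' b', 0 ≤ a' → a' ≤ a → b ≤ b' → b' ≤ T →
      (∀ t ∈ Ioo a' b', φ₁ t = 0 ∧ φ₂ t ≠ 0) → a' = a ∧ b' = b

/-- `(a,b)` is a `u₂`-singular arc. -/
def IsU2SingularArc (T : ℝ) (φ₁ φ₂ : ℝ → ℝ) (a b : ℝ) : Prop :=
  0 ≤ a ∧ a < b ∧ b ≤ T ∧ (∀ t ∈ Ioo a b, φ₂ t = 0 ∧ φ₁ t ≠ 0) ∧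
    ∀ a' b', 0 ≤ a' → a' ≤ a → b ≤ b' → b' ≤ T →
      (∀ t ∈ Ioo a' b', φ₂ t = 0 ∧ φ₁ t ≠ 0) → a' = a ∧ b' = b

/-- A singular arc is a `u₁`- or `u₂`-singular arc. -/
def IsSingularArc (T : ℝ) (φ₁ φ₂ : ℝ → ℝ) (a b : ℝ) : Prop :=
  IsU1SingularArc T φ₁ φ₂ a b ∨ IsU2SingularArc T φ₁ φ₂ a b

/-- A switching time: a point of `(0,T)` separating two bang arcs. -/
def IsSwitchingTime (T : ℝ) (φ₁ φ₂ : ℝ → ℝ) (τ : ℝ) : Prop :=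
  ∃ a b, IsBangArc T φ₁ φ₂ a τ ∧ IsBangArc T φ₁ φ₂ τ b

/-- The scalar control `ui` switches at the switching time `τ`: it is a.e. equal to
a constant of modulus 1 on a left neighborhood of `τ` and to the opposite constant
on a right neighborhood of `τ`. -/
def SwitchesAt (T : ℝ) (φ₁ φ₂ : ℝ → ℝ) (ui : ℝ → ℝ) (τ : ℝ) : Prop :=
  IsSwitchingTime T φ₁ φ₂ τ ∧ ∃ c : ℝ, |c| = 1 ∧ ∃ ε > 0,
    (∀ᵐ t ∂volume, t ∈ Ioo (τ - ε) τ → ui t = c) ∧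
    (∀ᵐ t ∂volume, t ∈ Ioo τ (τ + ε) → ui t = -c)

/-- The trajectory is bang-bang: `[0,T]` is the union of the closures of finitely
many bang arcs. -/
def IsBangBang (T : ℝ) (φ₁ φ₂ : ℝ → ℝ) : Prop :=
  ∃ (n : ℕ) (a b : Fin n → ℝ), (∀ i, IsBangArc T φ₁ φ₂ (a i) (b i)) ∧
    Icc (0:ℝ) T = ⋃ i, Icc (a i) (b i)

/-!
Along an extremal, `φ₁' = -u₂ φ₁₂` and `φ₂' = u₁ φ₁₂` almost everywhere. If `φ₁` vanishes on an
interval, then `u₂ = 0` a.e. there since `φ₁₂ ≠ 0`; the maximality condition then reads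
`0 = |φ₂|`, so `φ₂` vanishes too and likewise `u₁ = 0`. The trajectory therefore rests on that
interval, and cutting the interval out gives an admissible pair reaching `q T` in less time.
The case of `φ₂` is symmetric.
-/

open Filter Topology

section IntegralRepresentation

variable {F : Type*} [NormedAddCommGroup F] [NormedSpace ℝ F]
  {T : ℝ} {f q : ℝ → F}

theorem setIntegral_Icc_eq_intervalIntegral {t : ℝ} (ht : 0 ≤ t) :
    ∫ s in Icc (0:ℝ) t, f s = ∫ s in (0:ℝ)..t, f s := by
  rw [intervalIntegral.integral_of_le ht, integral_Icc_eq_integral_Ioc]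

theorem continuousOn_of_eq_add_setIntegral (hf : IntegrableOn f (Icc 0 T))
    (hq : ∀ t ∈ Icc (0:ℝ) T, q t = q 0 + ∫ s in Icc (0:ℝ) t, f s) :
    ContinuousOn q (Icc 0 T) :=
  (continuousOn_const.add (intervalIntegral.continuousOn_primitive_Icc hf)).congr hq

theorem ae_hasDerivAt_of_eq_add_setIntegral [CompleteSpace F] (hf : IntegrableOn f (Icc 0 T))
    (hq : ∀ t ∈ Icc (0:ℝ) T, q t = q 0 + ∫ s in Icc (0:ℝ) t, f s) :
    ∀ᵐ t, t ∈ Ioo (0:ℝ) T → HasDerivAt q (f t) t := by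
  rcases lt_or_ge T 0 with hT | hT
  · exact ae_of_all _ fun t ht => absurd (ht.1.trans ht.2) hT.not_gt
  have hf' : IntervalIntegrable f volume 0 T :=
    (intervalIntegrable_iff_integrableOn_Icc_of_le hT).2 hf
  filter_upwards [hf'.ae_hasDerivAt_integral] with t hderiv ht
  have hmem : t ∈ uIcc 0 T := by rw [uIcc_of_le hT]; exact Ioo_subset_Icc_self ht
  have hq_eq : q =ᶠ[𝓝 t] fun x => q 0 + ∫ s in (0:ℝ)..x, f s := by
    filter_upwards [isOpen_Ioo.mem_nhds ht] with x hx
    rw [hq x (Ioo_subset_Icc_self hx), setIntegral_Icc_eq_intervalIntegral hx.1.le]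
  exact ((hderiv hmem 0 left_mem_uIcc).const_add (q 0)).congr_of_eventuallyEq hq_eq

end IntegralRepresentation

section CutTime

/-- The time change `t ↦ t` for `t ≤ a`, `t ↦ t + d` for `t > a`: running a trajectory along it
skips the stretch `(a, a + d]`. -/
def cutTime (a d t : ℝ) : ℝ := if t ≤ a then t else t + d

variable {a d t : ℝ}

theorem cutTime_of_le (h : t ≤ a) : cutTime a d t = t := if_pos h

theorem cutTime_of_lt (h : a < t) : cutTime a d t = t + d := if_neg h.not_ge

theorem measurable_cutTime : Measurable (cutTime a d) :=
  Measurable.ite measurableSet_Iic measurable_id (measurable_id.add_const d)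

theorem cutTime_mem_Icc {T : ℝ} (hd : 0 ≤ d) (ht : t ∈ Icc 0 (T - d)) :
    cutTime a d t ∈ Icc 0 T := by
  rcases le_or_gt t a with h | h
  · rw [cutTime_of_le h]; exact ⟨ht.1, by linarith [ht.2]⟩
  · rw [cutTime_of_lt h]; exact ⟨by linarith [ht.1], by linarith [ht.2]⟩

theorem eqOn_comp_cutTime_Iic {β : Type*} (f : ℝ → β) :
    EqOn (fun s => f (cutTime a d s)) f (Iic a) :=
  fun _ hs => congrArg f (cutTime_of_le hs)

theorem eqOn_comp_cutTime_Ioi {β : Type*} (f : ℝ → β) :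
    EqOn (fun s => f (cutTime a d s)) (fun s => f (s + d)) (Ioi a) :=
  fun _ hs => congrArg f (cutTime_of_lt hs)

variable {F : Type*} [NormedAddCommGroup F] {f : ℝ → F}

theorem IntervalIntegrable.comp_cutTime (hf : IntervalIntegrable f volume 0 (t + d))
    (ha : 0 ≤ a) (hat : a ≤ t) (hd : 0 ≤ d) :
    IntervalIntegrable (fun s => f (cutTime a d s)) volume 0 t := by
  have hbefore : IntervalIntegrable f volume 0 a :=
    hf.mono_set (uIcc_subset_uIcc left_mem_uIcc (mem_uIcc_of_le ha (by linarith)))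
  have hafter : IntervalIntegrable f volume (a + d) (t + d) :=
    hf.mono_set (uIcc_subset_uIcc (mem_uIcc_of_le (by linarith) (by linarith)) right_mem_uIcc)
  have hshift : IntervalIntegrable (fun s => f (s + d)) volume a t := by
    simpa using hafter.comp_add_right d
  refine hbefore.congr (fun s hs => ?_) |>.trans (hshift.congr fun s hs => ?_)
  · exact (eqOn_comp_cutTime_Iic f (uIoc_of_le ha ▸ hs).2).symm
  · exact (eqOn_comp_cutTime_Ioi f (uIoc_of_le hat ▸ hs).1).symm

variable [NormedSpace ℝ F]

theorem intervalIntegral_comp_cutTime (hf : IntervalIntegrable f volume 0 (t + d))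
    (hgap : ∀ᵐ s, s ∈ Ioo a (a + d) → f s = 0) (ha : 0 ≤ a) (hat : a ≤ t) (hd : 0 ≤ d) :
    ∫ s in (0:ℝ)..t, f (cutTime a d s) = ∫ s in (0:ℝ)..t + d, f s := by
  have hcomp := hf.comp_cutTime ha hat hd
  have hgap_zero : ∫ s in a..a + d, f s = 0 := by
    rw [intervalIntegral.integral_of_le (by linarith), integral_Ioc_eq_integral_Ioo]
    exact setIntegral_eq_zero_of_ae_eq_zero hgap
  have hat' : a ∈ uIcc 0 t := mem_uIcc_of_le ha hat
  have had : a ∈ uIcc 0 (t + d) := mem_uIcc_of_le ha (by linarith)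
  have hadd : a + d ∈ uIcc 0 (t + d) := mem_uIcc_of_le (by linarith) (by linarith)
  calc ∫ s in (0:ℝ)..t, f (cutTime a d s)
      = (∫ s in (0:ℝ)..a, f (cutTime a d s)) + ∫ s in a..t, f (cutTime a d s) :=
        (intervalIntegral.integral_add_adjacent_intervals
          (hcomp.mono_set (uIcc_subset_uIcc left_mem_uIcc hat'))
          (hcomp.mono_set (uIcc_subset_uIcc hat' right_mem_uIcc))).symm
    _ = (∫ s in (0:ℝ)..a, f s) + ∫ s in a..t, f (s + d) := by
        congr 1
        · exact intervalIntegral.integral_congr fun s hs =>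
            eqOn_comp_cutTime_Iic f (uIcc_of_le ha ▸ hs).2
        · exact intervalIntegral.integral_congr_ae (ae_of_all _ fun s hs =>
            eqOn_comp_cutTime_Ioi f (uIoc_of_le hat ▸ hs).1)
    _ = (∫ s in (0:ℝ)..a, f s) + (∫ s in a..a + d, f s) + ∫ s in a + d..t + d, f s := by
        rw [intervalIntegral.integral_comp_add_right, hgap_zero, add_zero]
    _ = ∫ s in (0:ℝ)..t + d, f s := by
        rw [intervalIntegral.integral_add_adjacent_intervals
            (hf.mono_set (uIcc_subset_uIcc left_mem_uIcc had))
            (hf.mono_set (uIcc_subset_uIcc had hadd)),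
          intervalIntegral.integral_add_adjacent_intervals
            (hf.mono_set (uIcc_subset_uIcc left_mem_uIcc hadd))
            (hf.mono_set (uIcc_subset_uIcc hadd right_mem_uIcc))]

end CutTime

section TimeOptimality

variable {X₁ X₂ : E3 → E3} {T : ℝ} {q : ℝ → E3} {u : ℝ → ℝ × ℝ}

theorem IsAdmissiblePair.comp_cutTime (hadm : IsAdmissiblePair X₁ X₂ T q u) {a d : ℝ}
    (ha : 0 ≤ a) (hd : 0 ≤ d) (hadT : a + d ≤ T)
    (hrest : ∀ᵐ s, s ∈ Ioo a (a + d) → (u s).1 • X₁ (q s) + (u s).2 • X₂ (q s) = 0) :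
    IsAdmissiblePair X₁ X₂ (T - d) (q ∘ cutTime a d) (u ∘ cutTime a d) ∧
      q (cutTime a d (T - d)) = q T := by
  obtain ⟨hT, hu_meas, hu_bound, hf, hq⟩ := hadm
  set f : ℝ → E3 := fun s => (u s).1 • X₁ (q s) + (u s).2 • X₂ (q s)
  have hf' : IntervalIntegrable f volume 0 T :=
    (intervalIntegrable_iff_integrableOn_Icc_of_le hT).2 hf
  have hq' : ∀ t ∈ Icc (0:ℝ) T, q t = q 0 + ∫ s in (0:ℝ)..t, f s := fun t ht => by
    rw [hq t ht, setIntegral_Icc_eq_intervalIntegral ht.1]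
  have hf_upto : ∀ t ∈ Icc (0:ℝ) (T - d), IntervalIntegrable f volume 0 (t + d) := fun t ht =>
    hf'.mono_set (uIcc_subset_uIcc left_mem_uIcc
      (mem_uIcc_of_le (by linarith [ht.1]) (by linarith [ht.2])))
  have hcut : ∀ t ∈ Icc (0:ℝ) (T - d),
      q (cutTime a d t) = q 0 + ∫ s in (0:ℝ)..t, f (cutTime a d s) := by
    intro t ht
    rcases le_or_gt t a with hta | hat
    · rw [cutTime_of_le hta, intervalIntegral.integral_congr fun s hs =>
        eqOn_comp_cutTime_Iic f (uIcc_of_le ht.1 ▸ hs |>.2.trans hta)]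
      exact hq' t ⟨ht.1, by linarith [ht.2]⟩
    · rw [cutTime_of_lt hat, intervalIntegral_comp_cutTime (hf_upto t ht) hrest ha hat.le hd]
      exact hq' (t + d) ⟨by linarith [ht.1], by linarith [ht.2]⟩
  have haT : a ≤ T - d := by linarith
  have hend : T - d ∈ Icc (0:ℝ) (T - d) := ⟨by linarith, le_rfl⟩
  refine ⟨⟨by linarith, hu_meas.comp measurable_cutTime,
    fun t ht => hu_bound _ (cutTime_mem_Icc hd ht), ?_, fun t ht => ?_⟩, ?_⟩
  · exact (intervalIntegrable_iff_integrableOn_Icc_of_le (by linarith)).1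
      ((hf_upto _ hend).comp_cutTime ha haT hd)
  · simp only [Function.comp_apply, cutTime_of_le ha]
    rw [setIntegral_Icc_eq_intervalIntegral ht.1]
    exact hcut t ht
  · rw [hcut _ hend, intervalIntegral_comp_cutTime (hf_upto _ hend) hrest ha haT hd,
      sub_add_cancel, hq' T ⟨hT, le_rfl⟩]

theorem IsAdmissiblePair.not_isTimeOptimal (hadm : IsAdmissiblePair X₁ X₂ T q u) {a b : ℝ}
    (ha : 0 ≤ a) (hab : a < b) (hbT : b ≤ T)
    (hrest : ∀ᵐ s, s ∈ Ioo a b → (u s).1 • X₁ (q s) + (u s).2 • X₂ (q s) = 0) :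
    ¬ IsTimeOptimal X₁ X₂ T q := by
  rw [← add_sub_cancel a b] at hrest
  obtain ⟨hadm', hend⟩ := hadm.comp_cutTime ha (sub_nonneg.2 hab.le) (by linarith) hrest
  exact fun hopt => hopt ⟨T - (b - a), _, _, by linarith, hadm', by simp [cutTime_of_le ha], hend⟩

end TimeOptimality

section SwitchingFunctions

variable {X X₁ X₂ : E3 → E3} {T : ℝ} {q lam : ℝ → E3} {u : ℝ → ℝ × ℝ}

theorem hasDerivAt_phiF {t : ℝ} {v w : E3} (hX : DifferentiableAt ℝ X (q t))
    (hq : HasDerivAt q v t) (hlam : HasDerivAt lam w t) :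
    HasDerivAt (phiF X q lam) (⟪lam t, fderiv ℝ X (q t) v⟫ + ⟪w, X (q t)⟫) t :=
  hlam.inner ℝ (hX.hasFDerivAt.comp_hasDerivAt t hq)

theorem IsExtremalLift.continuousOn_phiF (hlift : IsExtremalLift X₁ X₂ T q u lam)
    (hadm : IsAdmissiblePair X₁ X₂ T q u) (hX : Continuous X) :
    ContinuousOn (phiF X q lam) (Icc 0 T) :=
  (continuousOn_of_eq_add_setIntegral hlift.2.1 hlift.2.2.1).inner
    (hX.comp_continuousOn (continuousOn_of_eq_add_setIntegral hadm.2.2.2.1 hadm.2.2.2.2))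

theorem IsExtremalLift.ae_hasDerivAt_phiF (hlift : IsExtremalLift X₁ X₂ T q u lam)
    (hadm : IsAdmissiblePair X₁ X₂ T q u) (hX : Differentiable ℝ X) :
    ∀ᵐ t, t ∈ Ioo (0:ℝ) T → HasDerivAt (phiF X q lam)
      (⟪lam t, fderiv ℝ X (q t) ((u t).1 • X₁ (q t) + (u t).2 • X₂ (q t))⟫ +
        ⟪adjVec X₁ X₂ u q lam t, X (q t)⟫) t := by
  filter_upwards [ae_hasDerivAt_of_eq_add_setIntegral hadm.2.2.2.1 hadm.2.2.2.2,
    ae_hasDerivAt_of_eq_add_setIntegral hlift.2.1 hlift.2.2.1] with t hq hlam ht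
  exact hasDerivAt_phiF (hX _) (hq ht) (hlam ht)

theorem IsExtremalLift.ae_hasDerivAt_phiF₁ (hlift : IsExtremalLift X₁ X₂ T q u lam)
    (hadm : IsAdmissiblePair X₁ X₂ T q u) (hX₁ : Differentiable ℝ X₁) :
    ∀ᵐ t, t ∈ Ioo (0:ℝ) T →
      HasDerivAt (phiF X₁ q lam) (-((u t).2 * phiF (X12 X₁ X₂) q lam t)) t := by
  filter_upwards [hlift.ae_hasDerivAt_phiF hadm hX₁] with t h ht
  convert h ht using 1
  simp only [adjVec, X12, lieBracketVF, phiF, map_add, map_smul, inner_neg_left, inner_add_left,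
    real_inner_smul_left, ContinuousLinearMap.adjoint_inner_left, add_apply,
    smul_apply, inner_add_right, inner_sub_right, real_inner_smul_right]
  ring

theorem IsExtremalLift.ae_hasDerivAt_phiF₂ (hlift : IsExtremalLift X₁ X₂ T q u lam)
    (hadm : IsAdmissiblePair X₁ X₂ T q u) (hX₂ : Differentiable ℝ X₂) :
    ∀ᵐ t, t ∈ Ioo (0:ℝ) T →
      HasDerivAt (phiF X₂ q lam) ((u t).1 * phiF (X12 X₁ X₂) q lam t) t := by
  filter_upwards [hlift.ae_hasDerivAt_phiF hadm hX₂] with t h ht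
  convert h ht using 1
  simp only [adjVec, X12, lieBracketVF, phiF, map_add, map_smul, inner_neg_left, inner_add_left,
    real_inner_smul_left, ContinuousLinearMap.adjoint_inner_left, add_apply,
    smul_apply, inner_add_right, inner_sub_right, real_inner_smul_right]
  ring

end SwitchingFunctions

theorem HasDerivAt.eq_zero_of_eqOn_zero {φ : ℝ → ℝ} {a b t c : ℝ}
    (hφ : ∀ s ∈ Ioo a b, φ s = 0) (ht : t ∈ Ioo a b) (hd : HasDerivAt φ c t) : c = 0 :=
  hd.unique ((hasDerivAt_const t 0).congr_of_eventuallyEq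
    (eventually_of_mem (isOpen_Ioo.mem_nhds ht) hφ))

theorem ae_eq_zero_of_switching_eq_zero {s : Set ℝ} {φ₁ φ₂ g v₁ v₂ : ℝ → ℝ} {a b : ℝ}
    (hab : Ioo a b ⊆ s) (hφ₂ : ContinuousOn φ₂ s)
    (hd₁ : ∀ᵐ t, t ∈ s → HasDerivAt φ₁ (-(v₂ t * g t)) t)
    (hd₂ : ∀ᵐ t, t ∈ s → HasDerivAt φ₂ (v₁ t * g t) t) (hg : ∀ t ∈ s, g t ≠ 0)
    (hmax : ∀ᵐ t, t ∈ s → v₁ t * φ₁ t + v₂ t * φ₂ t = |φ₁ t| + |φ₂ t|)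
    (hφ₁ : ∀ t ∈ Ioo a b, φ₁ t = 0) :
    ∀ᵐ t, t ∈ Ioo a b → v₁ t = 0 ∧ v₂ t = 0 := by
  have hv₂ : ∀ᵐ t, t ∈ Ioo a b → v₂ t = 0 := by
    filter_upwards [hd₁] with t hd ht
    simpa [hg t (hab ht)] using (hd (hab ht)).eq_zero_of_eqOn_zero hφ₁ ht
  have hφ₂_ae : ∀ᵐ t, t ∈ Ioo a b → φ₂ t = 0 := by
    filter_upwards [hv₂, hmax] with t hv hm ht
    simpa [hφ₁ t ht, hv ht, eq_comm] using hm (hab ht)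
  have hφ₂_zero : ∀ t ∈ Ioo a b, φ₂ t = 0 := fun t ht =>
    Measure.eqOn_open_of_ae_eq (g := 0) ((ae_restrict_iff' measurableSet_Ioo).2 hφ₂_ae)
      isOpen_Ioo (hφ₂.mono hab) continuousOn_const ht
  filter_upwards [hd₂, hv₂] with t hd hv ht
  refine ⟨?_, hv ht⟩
  simpa [hg t (hab ht)] using (hd (hab ht)).eq_zero_of_eqOn_zero hφ₂_zero ht

theorem IsExtremalLift.ae_controls_eq_zero {X₁ X₂ : E3 → E3} {T : ℝ} {q lam : ℝ → E3}
    {u : ℝ → ℝ × ℝ} (hlift : IsExtremalLift X₁ X₂ T q u lam) (hadm : IsAdmissiblePair X₁ X₂ T q u)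
    (hX₁ : Differentiable ℝ X₁) (hX₂ : Differentiable ℝ X₂)
    (h12 : ∀ t ∈ Icc (0:ℝ) T, phiF (X12 X₁ X₂) q lam t ≠ 0) {a b : ℝ} (ha : 0 ≤ a) (hbT : b ≤ T)
    (hφ : (∀ t ∈ Ioo a b, phiF X₁ q lam t = 0) ∨ ∀ t ∈ Ioo a b, phiF X₂ q lam t = 0) :
    ∀ᵐ t, t ∈ Ioo a b → (u t).1 = 0 ∧ (u t).2 = 0 := by
  have hd₁ := hlift.ae_hasDerivAt_phiF₁ hadm hX₁
  have hd₂ := hlift.ae_hasDerivAt_phiF₂ hadm hX₂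
  have hc₁ := (hlift.continuousOn_phiF hadm hX₁.continuous).mono Ioo_subset_Icc_self
  have hc₂ := (hlift.continuousOn_phiF hadm hX₂.continuous).mono Ioo_subset_Icc_self
  have hg : ∀ t ∈ Ioo (0:ℝ) T, phiF (X12 X₁ X₂) q lam t ≠ 0 :=
    fun t ht => h12 t (Ioo_subset_Icc_self ht)
  have hmax : ∀ᵐ t, t ∈ Ioo (0:ℝ) T → (u t).1 * phiF X₁ q lam t + (u t).2 * phiF X₂ q lam t =
      |phiF X₁ q lam t| + |phiF X₂ q lam t| :=
    hlift.2.2.2.mono fun t h ht => h (Ioo_subset_Icc_self ht)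
  rcases hφ with hφ | hφ
  · exact ae_eq_zero_of_switching_eq_zero (Ioo_subset_Ioo ha hbT) hc₂ hd₁ hd₂ hg hmax hφ
  -- the first case with the roles of `φ₁, φ₂` exchanged and `φ₁₂` replaced by `-φ₁₂`
  refine (ae_eq_zero_of_switching_eq_zero (g := fun t => -phiF (X12 X₁ X₂) q lam t)
    (Ioo_subset_Ioo ha hbT) hc₁ ?_ ?_ (fun t ht => neg_ne_zero.2 (hg t ht)) ?_ hφ).mono
    fun t h ht => (h ht).symm
  · filter_upwards [hd₂] with t h ht; simpa using h ht
  · filter_upwards [hd₁] with t h ht; simpa using h ht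
  · filter_upwards [hmax] with t h ht; linarith [h ht]

/-- If an extremal lift of a time-optimal trajectory satisfies
`φ₁₂(t) ≠ 0` for all `t ∈ [0,T]`, then neither `φ₁` nor `φ₂` vanishes identically on
a nontrivial subinterval of `[0,T]`; in particular there are no singular arcs. -/
theorem statement_11 (X₁ X₂ : E3 → E3) (hX₁ : ContDiff ℝ (⊤ : ℕ∞) X₁)
    (hX₂ : ContDiff ℝ (⊤ : ℕ∞) X₂) (T : ℝ) (q : ℝ → E3) (u : ℝ → ℝ × ℝ) (lam : ℝ → E3)
    (hadm : IsAdmissiblePair X₁ X₂ T q u) (hopt : IsTimeOptimal X₁ X₂ T q)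
    (hlift : IsExtremalLift X₁ X₂ T q u lam)
    (h12 : ∀ t ∈ Icc (0:ℝ) T, phiF (X12 X₁ X₂) q lam t ≠ 0) :
    (∀ a b : ℝ, 0 ≤ a → a < b → b ≤ T →
      ¬ ∀ t ∈ Ioo a b, phiF X₁ q lam t = 0) ∧
    (∀ a b : ℝ, 0 ≤ a → a < b → b ≤ T →
      ¬ ∀ t ∈ Ioo a b, phiF X₂ q lam t = 0) ∧
    ¬ ∃ a b : ℝ, IsSingularArc T (phiF X₁ q lam) (phiF X₂ q lam) a b := by
  have no_vanishing : ∀ a b : ℝ, 0 ≤ a → a < b → b ≤ T →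
      ¬ ((∀ t ∈ Ioo a b, phiF X₁ q lam t = 0) ∨ ∀ t ∈ Ioo a b, phiF X₂ q lam t = 0) := by
    intro a b ha hab hbT hφ
    have hu := hlift.ae_controls_eq_zero hadm (hX₁.differentiable (by simp))
      (hX₂.differentiable (by simp)) h12 ha hbT hφ
    exact hadm.not_isTimeOptimal ha hab hbT (hu.mono fun t h ht => by simp [h ht]) hopt
  refine ⟨fun a b ha hab hbT hφ => no_vanishing a b ha hab hbT (.inl hφ),
    fun a b ha hab hbT hφ => no_vanishing a b ha hab hbT (.inr hφ), ?_⟩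
  rintro ⟨a, b, ⟨ha, hab, hbT, h, -⟩ | ⟨ha, hab, hbT, h, -⟩⟩
  · exact no_vanishing a b ha hab hbT (.inl fun t ht => (h t ht).1)
  · exact no_vanishing a b ha hab hbT (.inr fun t ht => (h t ht).1)

end
end

section
/- Let n ≥ 1, let X, Y : ℝⁿ → ℝⁿ be smooth vector fields, let δ > 0, let φ : (−δ, δ) → ℝⁿ be differentiable with φ'(t) = X(φ(t)) and φ(0) = p, and let M : (−δ, δ) → ℝⁿˣⁿ be differentiable with M'(t) = DX(φ(t))·M(t), M(0) = I, and M(t) invertible for all t. Then for every compact subinterval K ⊆ (−δ, δ) containing 0 there exists C > 0 such that ‖M(t)⁻¹·Y(φ(t)) − Y(p) − t·[X,Y](p)‖ ≤ C·t² for all t ∈ K, where [X,Y](x) := DY(x)·X(x) − DX(x)·Y(x). -/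
/-!
Put `g t = M(t)⁻¹ Y(φ t)`. Differentiating `M⁻¹` via the variational equation gives
`(M⁻¹)' = -M⁻¹ · DX(φ)`, hence `g' t = M(t)⁻¹ [X,Y](φ t)`: the derivative of the pullback of any
field `Z` is the pullback of `[X,Z]`. Applied to `Z = [X,Y]`, the derivative of `g'` is the
continuous function `M(t)⁻¹ [X,[X,Y]](φ t)`, bounded on the compact interval, so the mean value
inequality applied twice bounds `g t - g 0 - t g' 0` by `C t²`.
-/

open Set

noncomputable section

open Filter Topology

section SecondOrderMeanValue

variable {E : Type*} [NormedAddCommGroup E] [NormedSpace ℝ E]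

theorem norm_sub_sub_smul_le_of_norm_deriv_deriv_le {g G G' : ℝ → E} {C x y : ℝ}
    (hg : ∀ s ∈ uIcc x y, HasDerivAt g (G s) s) (hG : ∀ s ∈ uIcc x y, HasDerivAt G (G' s) s)
    (hC : ∀ s ∈ uIcc x y, ‖G' s‖ ≤ C) :
    ‖g y - g x - (y - x) • G x‖ ≤ C * (y - x) ^ 2 := by
  have hconv : Convex ℝ (uIcc x y) := convex_uIcc x y
  have hC0 : 0 ≤ C := (norm_nonneg _).trans (hC x left_mem_uIcc)
  have hG_sub : ∀ s ∈ uIcc x y, ‖G s - G x‖ ≤ C * |y - x| := fun s hs =>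
    calc ‖G s - G x‖ ≤ C * ‖s - x‖ :=
          hconv.norm_image_sub_le_of_norm_hasDerivWithin_le
            (fun u hu => (hG u hu).hasDerivWithinAt) hC left_mem_uIcc hs
      _ ≤ C * |y - x| := mul_le_mul_of_nonneg_left (abs_sub_left_of_mem_uIcc hs) hC0
  have hf : ∀ s ∈ uIcc x y,
      HasDerivWithinAt (fun s => g s - (s - x) • G x) (G s - G x) (uIcc x y) s := fun s hs =>
    ((hg s hs).sub (((hasDerivAt_id s).sub_const x).smul_const (G x))).hasDerivWithinAt.congr_deriv
      (by rw [one_smul])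
  calc ‖g y - g x - (y - x) • G x‖ = ‖(g y - (y - x) • G x) - (g x - (x - x) • G x)‖ := by
        rw [sub_self, zero_smul, sub_zero, sub_right_comm]
    _ ≤ C * |y - x| * ‖y - x‖ :=
        hconv.norm_image_sub_le_of_norm_hasDerivWithin_le hf hG_sub left_mem_uIcc right_mem_uIcc
    _ = C * (y - x) ^ 2 := by rw [Real.norm_eq_abs, mul_assoc, abs_mul_abs_self, sq]

theorem exists_pos_norm_sub_sub_smul_le_sq {g G G' : ℝ → E} {a b x : ℝ}
    (hg : ∀ s ∈ Icc a b, HasDerivAt g (G s) s) (hG : ∀ s ∈ Icc a b, HasDerivAt G (G' s) s)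
    (hG' : ContinuousOn G' (Icc a b)) (hx : x ∈ Icc a b) :
    ∃ C > 0, ∀ y ∈ Icc a b, ‖g y - g x - (y - x) • G x‖ ≤ C * (y - x) ^ 2 := by
  obtain ⟨C, hC⟩ := isCompact_Icc.exists_bound_of_continuousOn hG'
  refine ⟨max C 0 + 1, by positivity, fun y hy => ?_⟩
  have hsub : uIcc x y ⊆ Icc a b := uIcc_subset_Icc hx hy
  exact norm_sub_sub_smul_le_of_norm_deriv_deriv_le (fun s hs => hg s (hsub hs))
    (fun s hs => hG s (hsub hs))
    (fun s hs => (hC s (hsub hs)).trans (by linarith [le_max_left C 0]))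

end SecondOrderMeanValue

section Inverse

variable {R : Type*} [NormedRing R] [NormedAlgebra ℝ R] [CompleteSpace R]
  {M Minv : ℝ → R} {t : ℝ}

theorem HasDerivAt.inverse_of_eventually_mul_eq_one {M' : R} (hM : HasDerivAt M M' t)
    (hinv : ∀ᶠ s in 𝓝 t, Minv s * M s = 1 ∧ M s * Minv s = 1) :
    HasDerivAt Minv (-(Minv t * M' * Minv t)) t := by
  let u : Rˣ := ⟨M t, Minv t, hinv.self_of_nhds.2, hinv.self_of_nhds.1⟩
  have hMinv : Minv =ᶠ[𝓝 t] fun s => Ring.inverse (M s) := hinv.mono fun s hs =>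
    (Ring.inverse_unit ⟨M s, Minv s, hs.2, hs.1⟩).symm
  exact ((hasFDerivAt_ringInverse (𝕜 := ℝ) u).comp_hasDerivAt t hM).congr_of_eventuallyEq hMinv

theorem HasDerivAt.inverse_of_hasDerivAt_mul_left {A : R} (hM : HasDerivAt M (A * M t) t)
    (hinv : ∀ᶠ s in 𝓝 t, Minv s * M s = 1 ∧ M s * Minv s = 1) :
    HasDerivAt Minv (-(Minv t * A)) t := by
  simpa only [mul_assoc, hinv.self_of_nhds.2, mul_one] using
    hM.inverse_of_eventually_mul_eq_one hinv

end Inverse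

theorem hasDerivAt_apply_comp_integralCurve {E : Type*} [NormedAddCommGroup E] [NormedSpace ℝ E]
    {X Z : E → E} {φ : ℝ → E} {N : ℝ → E →L[ℝ] E} {t : ℝ} (hφ : HasDerivAt φ (X (φ t)) t)
    (hN : HasDerivAt N (-((N t).comp (fderiv ℝ X (φ t)))) t) (hZ : DifferentiableAt ℝ Z (φ t)) :
    HasDerivAt (fun s => N s (Z (φ s))) (N t (lieBracketVF X Z (φ t))) t := by
  refine (hN.clm_apply (hZ.hasFDerivAt.comp_hasDerivAt t hφ)).congr_deriv ?_
  simp only [lieBracketVF, map_sub, neg_apply,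
    ContinuousLinearMap.comp_apply, Function.comp_apply]
  abel

-- `lieBracketVF X Y` unfolds to Mathlib's `VectorField.lieBracket ℝ X Y`.
theorem contDiff_lieBracketVF {E : Type*} [NormedAddCommGroup E] [NormedSpace ℝ E]
    {X Y : E → E} (hX : ContDiff ℝ (⊤ : ℕ∞) X) (hY : ContDiff ℝ (⊤ : ℕ∞) Y) :
    ContDiff ℝ (⊤ : ℕ∞) (lieBracketVF X Y) :=
  hX.lieBracket_vectorField (𝕜 := ℝ) hY (by exact_mod_cast le_rfl)

theorem statement_14_general (n : ℕ)
    (X Y : EuclideanSpace ℝ (Fin n) → EuclideanSpace ℝ (Fin n))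
    (hX : ContDiff ℝ (⊤ : ℕ∞) X) (hY : ContDiff ℝ (⊤ : ℕ∞) Y)
    (δ : ℝ) (p : EuclideanSpace ℝ (Fin n))
    (φ : ℝ → EuclideanSpace ℝ (Fin n)) (hφ0 : φ 0 = p)
    (hφ : ∀ t ∈ Ioo (-δ) δ, HasDerivAt φ (X (φ t)) t)
    (M Minv : ℝ → EuclideanSpace ℝ (Fin n) →L[ℝ] EuclideanSpace ℝ (Fin n))
    (hM0 : M 0 = ContinuousLinearMap.id ℝ (EuclideanSpace ℝ (Fin n)))
    (hM : ∀ t ∈ Ioo (-δ) δ, HasDerivAt M ((fderiv ℝ X (φ t)).comp (M t)) t)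
    (hMinv_left : ∀ t ∈ Ioo (-δ) δ,
      (Minv t).comp (M t) = ContinuousLinearMap.id ℝ (EuclideanSpace ℝ (Fin n)))
    (hMinv_right : ∀ t ∈ Ioo (-δ) δ,
      (M t).comp (Minv t) = ContinuousLinearMap.id ℝ (EuclideanSpace ℝ (Fin n))) :
    ∀ a b : ℝ, -δ < a → a ≤ 0 → 0 ≤ b → b < δ →
      ∃ C > (0:ℝ), ∀ t ∈ Icc a b,
        ‖Minv t (Y (φ t)) - Y p - t • lieBracketVF X Y p‖ ≤ C * t ^ 2 := by
  intro a b ha ha0 hb0 hb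
  have hK : Icc a b ⊆ Ioo (-δ) δ := fun t ht => ⟨ha.trans_le ht.1, ht.2.trans_lt hb⟩
  have hMinv' : ∀ t ∈ Ioo (-δ) δ, HasDerivAt Minv (-((Minv t).comp (fderiv ℝ X (φ t)))) t :=
    fun t ht => (hM t ht).inverse_of_hasDerivAt_mul_left <|
      eventually_of_mem (isOpen_Ioo.mem_nhds ht) fun s hs => ⟨hMinv_left s hs, hMinv_right s hs⟩
  have hpullback : ∀ Z, ContDiff ℝ (⊤ : ℕ∞) Z → ∀ t ∈ Icc a b,
      HasDerivAt (fun s => Minv s (Z (φ s))) (Minv t (lieBracketVF X Z (φ t))) t :=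
    fun Z hZ t ht => hasDerivAt_apply_comp_integralCurve (hφ t (hK ht)) (hMinv' t (hK ht))
      (hZ.differentiable (by simp) _)
  have hB : ContDiff ℝ (⊤ : ℕ∞) (lieBracketVF X Y) := contDiff_lieBracketVF hX hY
  have hB' : ContinuousOn (fun t => Minv t (lieBracketVF X (lieBracketVF X Y) (φ t))) (Icc a b) :=
    continuousOn_of_forall_continuousAt fun t ht => (hMinv' t (hK ht)).continuousAt.clm_apply
      ((contDiff_lieBracketVF hX hB).continuous.continuousAt.comp (hφ t (hK ht)).continuousAt)
  have hMinv0 : Minv 0 = ContinuousLinearMap.id ℝ (EuclideanSpace ℝ (Fin n)) := by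
    simpa [hM0] using hMinv_left 0 (hK ⟨ha0, hb0⟩)
  obtain ⟨C, hC, hbound⟩ :=
    exists_pos_norm_sub_sub_smul_le_sq (hpullback Y hY) (hpullback _ hB) hB' ⟨ha0, hb0⟩
  refine ⟨C, hC, fun t ht => ?_⟩
  simpa [hMinv0, hφ0] using hbound t ht

/-- If `φ` is the integral curve of `X` through `p` on `(−δ,δ)` and
`M` solves the variational equation `M' = DX(φ)·M`, `M(0) = I`, with `M(t)` invertible
(inverse `Minv t`), then on every compact subinterval `[a,b] ⊆ (−δ,δ)` containing `0`
one has `‖M(t)⁻¹·Y(φ(t)) − Y(p) − t·[X,Y](p)‖ ≤ C·t²`. -/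
theorem statement_14 (n : ℕ) (hn : 1 ≤ n)
    (X Y : EuclideanSpace ℝ (Fin n) → EuclideanSpace ℝ (Fin n))
    (hX : ContDiff ℝ (⊤ : ℕ∞) X) (hY : ContDiff ℝ (⊤ : ℕ∞) Y)
    (δ : ℝ) (hδ : 0 < δ) (p : EuclideanSpace ℝ (Fin n))
    (φ : ℝ → EuclideanSpace ℝ (Fin n)) (hφ0 : φ 0 = p)
    (hφ : ∀ t ∈ Ioo (-δ) δ, HasDerivAt φ (X (φ t)) t)
    (M Minv : ℝ → EuclideanSpace ℝ (Fin n) →L[ℝ] EuclideanSpace ℝ (Fin n))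
    (hM0 : M 0 = ContinuousLinearMap.id ℝ (EuclideanSpace ℝ (Fin n)))
    (hM : ∀ t ∈ Ioo (-δ) δ, HasDerivAt M ((fderiv ℝ X (φ t)).comp (M t)) t)
    (hMinv_left : ∀ t ∈ Ioo (-δ) δ,
      (Minv t).comp (M t) = ContinuousLinearMap.id ℝ (EuclideanSpace ℝ (Fin n)))
    (hMinv_right : ∀ t ∈ Ioo (-δ) δ,
      (M t).comp (Minv t) = ContinuousLinearMap.id ℝ (EuclideanSpace ℝ (Fin n))) :
    ∀ a b : ℝ, -δ < a → a ≤ 0 → 0 ≤ b → b < δ →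
      ∃ C > (0:ℝ), ∀ t ∈ Icc a b,
        ‖Minv t (Y (φ t)) - Y p - t • lieBracketVF X Y p‖ ≤ C * t ^ 2 :=
  statement_14_general n X Y hX hY δ p φ hφ0 hφ M Minv hM0 hM hMinv_left hMinv_right

end
end
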